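/- arXiv:0806.3569 — 4 statements merged into one kernel-verified Lean document; each statement's English description precedes it below -/
import Mathlib

section
/- Let μ₁₂, μ₂₃, μ₃₁ ∈ (0,4) with all corresponding angles θᵢⱼ = arccos(√μᵢⱼ/2) acute and θ₁₂+θ₂₃+θ₃₁ = π, and assume μ₁₂ ≤ μ₃₁. Then the function f(x) = μ₃₁/(2−x) + μ₂₃/(2 − μ₁₂/x) − 2 has exactly one root in the open interval (μ₁₂/2, 2), which is a double root of the associated quadratic. -/
/-!
Writing `μᵢⱼ = 4 cos² θᵢⱼ`, the angle condition `θ₁₂ + θ₂₃ + θ₃₁ = π` becomes the algebraic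
relation `μ₁₂ + μ₂₃ + μ₃₁ + √(μ₁₂ μ₂₃ μ₃₁) = 4`. Under this relation the numerator of `f`,
after clearing denominators, is `(4 - μ₂₃) (x - σ)²` with `σ² = p`, so `f` vanishes exactly at
`x = σ`, and `μ₁₂ ≤ μ₃₁` places `σ` in `(μ₁₂ / 2, 2)`.
-/

open Real Set

theorem cos_sq_add_cos_sq_add_cos_sq_add_two_mul_eq_one {A B C : ℝ} (h : A + B + C = π) :
    cos A ^ 2 + cos B ^ 2 + cos C ^ 2 + 2 * (cos A * cos B * cos C) = 1 := by
  have hC : cos C + cos A * cos B = sin A * sin B := by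
    rw [show C = π - (A + B) by linarith, cos_pi_sub, cos_add]
    ring
  have hsq : (cos C + cos A * cos B) ^ 2 = (1 - cos A ^ 2) * (1 - cos B ^ 2) := by
    rw [hC, mul_pow, sin_sq, sin_sq]
  linear_combination hsq

theorem add_add_add_sqrt_mul_eq_four_of_arccos_add_eq_pi {μ₁ μ₂ μ₃ : ℝ}
    (h₁ : μ₁ ∈ Icc (0 : ℝ) 4) (h₂ : μ₂ ∈ Icc (0 : ℝ) 4) (h₃ : μ₃ ∈ Icc (0 : ℝ) 4)
    (hsum : arccos (√μ₁ / 2) + arccos (√μ₂ / 2) + arccos (√μ₃ / 2) = π) :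
    μ₁ + μ₂ + μ₃ + √μ₁ * √μ₂ * √μ₃ = 4 := by
  have cos_arccos_half_sqrt {μ : ℝ} (hμ : μ ∈ Icc (0 : ℝ) 4) : cos (arccos (√μ / 2)) = √μ / 2 := by
    have : √μ ≤ 2 := sqrt_le_iff.2 ⟨zero_le_two, by linarith [hμ.2]⟩
    exact cos_arccos (by linarith [sqrt_nonneg μ]) (by linarith)
  have h := cos_sq_add_cos_sq_add_cos_sq_add_two_mul_eq_one hsum
  rw [cos_arccos_half_sqrt h₁, cos_arccos_half_sqrt h₂, cos_arccos_half_sqrt h₃, div_pow,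
    div_pow, div_pow, sq_sqrt h₁.1, sq_sqrt h₂.1, sq_sqrt h₃.1] at h
  linear_combination 4 * h

namespace AffinePrism

variable {μ12 μ23 μ31 s σ : ℝ}

theorem mul_sigma_eq (hkey : μ12 + μ23 + μ31 + s = 4) (h23 : μ23 < 4)
    (hσ : σ = -(μ23 + μ31 - μ12 - 4) / (4 - μ23)) :
    (4 - μ23) * σ = 2 * μ12 + s := by
  rw [hσ, mul_div_cancel₀ _ (by linarith)]
  linarith

theorem sigma_sq_eq (hkey : μ12 + μ23 + μ31 + s = 4) (hs : s ^ 2 = μ12 * μ23 * μ31)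
    (h23 : μ23 < 4) (hσ : (4 - μ23) * σ = 2 * μ12 + s) :
    σ ^ 2 = μ12 * (4 - μ31) / (4 - μ23) := by
  have h4 : 4 - μ23 ≠ 0 := by linarith
  rw [eq_div_iff h4]
  apply mul_left_cancel₀ h4
  linear_combination (2 * μ12 + s + (4 - μ23) * σ) * hσ + hs + 4 * μ12 * hkey

theorem sigma_mem_Ioo (hkey : μ12 + μ23 + μ31 + s = 4) (hs : 0 ≤ s) (h12 : 0 < μ12)
    (h23 : μ23 ∈ Ioo (0 : ℝ) 4) (hle : μ12 ≤ μ31) (hσ : (4 - μ23) * σ = 2 * μ12 + s) :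
    σ ∈ Ioo (μ12 / 2) 2 := by
  have h4 : 0 < 4 - μ23 := by linarith [h23.2]
  constructor
  · have : 0 < (4 - μ23) * (σ - μ12 / 2) := by
      rw [show (4 - μ23) * (σ - μ12 / 2) = s + μ12 * μ23 / 2 by linear_combination hσ]
      nlinarith [h23.1]
    linarith [(pos_iff_pos_of_mul_pos this).1 h4]
  · have : 0 < (4 - μ23) * (2 - σ) := by
      rw [show (4 - μ23) * (2 - σ) = (4 - μ23) + (μ31 - μ12) by linear_combination -hσ - hkey]
      linarith
    linarith [(pos_iff_pos_of_mul_pos this).1 h4]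

theorem residual_eq_div {x : ℝ} (hx : x ≠ 0) (hx2 : 2 - x ≠ 0) (hxμ : 2 * x - μ12 ≠ 0) :
    μ31 / (2 - x) + μ23 / (2 - μ12 / x) - 2 =
      (μ31 * (2 * x - μ12) + μ23 * x * (2 - x) - 2 * (2 - x) * (2 * x - μ12)) /
        ((2 - x) * (2 * x - μ12)) := by
  rw [show 2 - μ12 / x = (2 * x - μ12) / x by field_simp]
  field_simp

theorem residual_numerator_eq (hkey : μ12 + μ23 + μ31 + s = 4)
    (hσ : (4 - μ23) * σ = 2 * μ12 + s) (hσsq : (4 - μ23) * σ ^ 2 = μ12 * (4 - μ31)) (x : ℝ) :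
    μ31 * (2 * x - μ12) + μ23 * x * (2 - x) - 2 * (2 - x) * (2 * x - μ12) =
      (4 - μ23) * (x - σ) ^ 2 := by
  linear_combination 2 * x * hσ + 2 * x * hkey - hσsq

end AffinePrism

open AffinePrism

theorem affine_prism_one_double_root
    (μ12 μ23 μ31 : ℝ)
    (h12 : μ12 ∈ Set.Ioo (0 : ℝ) 4)
    (h23 : μ23 ∈ Set.Ioo (0 : ℝ) 4)
    (h31 : μ31 ∈ Set.Ioo (0 : ℝ) 4)
    (hsum : Real.arccos (Real.sqrt μ12 / 2) + Real.arccos (Real.sqrt μ23 / 2)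
            + Real.arccos (Real.sqrt μ31 / 2) = π)
    (hle : μ12 ≤ μ31)
    (σ p : ℝ)
    (hσ : σ = -(μ23 + μ31 - μ12 - 4) / (4 - μ23))
    (hp : p = μ12 * (4 - μ31) / (4 - μ23)) :
    ∃ x : ℝ, x ∈ Set.Ioo (μ12 / 2) 2 ∧
      μ31 / (2 - x) + μ23 / (2 - μ12 / x) - 2 = 0 ∧
      (∀ z ∈ Set.Ioo (μ12 / 2) 2,
        μ31 / (2 - z) + μ23 / (2 - μ12 / z) - 2 = 0 → z = x) ∧
      ∀ y : ℝ, y ^ 2 - 2 * σ * y + p = (y - x) ^ 2 := by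
  have hkey := add_add_add_sqrt_mul_eq_four_of_arccos_add_eq_pi
    (Ioo_subset_Icc_self h12) (Ioo_subset_Icc_self h23) (Ioo_subset_Icc_self h31) hsum
  have hs2 : (√μ12 * √μ23 * √μ31) ^ 2 = μ12 * μ23 * μ31 := by
    rw [mul_pow, mul_pow, sq_sqrt h12.1.le, sq_sqrt h23.1.le, sq_sqrt h31.1.le]
  have hσ' := mul_sigma_eq hkey h23.2 hσ
  have hσp : σ ^ 2 = p := hp ▸ sigma_sq_eq hkey hs2 h23.2 hσ'
  have hσmem := sigma_mem_Ioo hkey (by positivity) h12.1 h23 hle hσ'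
  have hroot : ∀ z ∈ Ioo (μ12 / 2) 2, μ31 / (2 - z) + μ23 / (2 - μ12 / z) - 2 = 0 ↔ z = σ := by
    rintro z ⟨hz_lo, hz_hi⟩
    have hσsq : (4 - μ23) * σ ^ 2 = μ12 * (4 - μ31) := by
      rw [hσp, hp, mul_div_cancel₀ _ (by linarith [h23.2])]
    rw [residual_eq_div (by linarith [h12.1]) (by linarith) (by linarith),
      residual_numerator_eq hkey hσ' hσsq, div_eq_zero_iff, mul_eq_zero, mul_eq_zero]
    have h4 : 4 - μ23 ≠ 0 := by linarith [h23.2]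
    have h2z : 2 - z ≠ 0 := by linarith
    have hzμ : 2 * z - μ12 ≠ 0 := by linarith
    simp only [h4, h2z, hzμ, false_or, or_false, pow_eq_zero_iff two_ne_zero, sub_eq_zero]
  refine ⟨σ, hσmem, (hroot σ hσmem).2 rfl, fun z hz hfz => (hroot z hz).1 hfz, fun y => ?_⟩
  rw [← hσp]
  ring
end

section
/- Let v₁, v₂, v₃, v₄ be the rows of the 4×4 matrix M(x,y,z) = [[−2, √μ₁₂, √μ₁₃, √μ₁₄], [√μ₁₂, −2, √μ₂₃·x, √μ₂₄/y], [√μ₁₃, √μ₂₃/x, −2, √μ₃₄·z], [√μ₁₄, √μ₂₄·y, √μ₃₄/z, −2]] with μᵢⱼ > 0 and x,y,z > 0, and let αᵢ = −eᵢ* be minus the i-th coordinate functional. For any ordered triple of distinct indices (i,j,k), define R_{(i,j,k)} = log( (αᵢ(v_j)·α_j(v_k)·α_k(v_i)) / (αᵢ(v_k)·α_k(v_j)·α_j(v_i)) ). Then R_{(2,3,4)} + R_{(1,4,3)} + R_{(1,2,4)} + R_{(1,3,2)} = 0. -/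
open Real Set

/-- Rows of the mirror tetrahedron matrix: row `i` is the polar vector `vᵢ`. -/
noncomputable def tetraV (m12 m13 m14 m23 m24 m34 x y z : ℝ) :
    Matrix (Fin 4) (Fin 4) ℝ :=
  !![-2, Real.sqrt m12, Real.sqrt m13, Real.sqrt m14;
     Real.sqrt m12, -2, Real.sqrt m23 * x, Real.sqrt m24 / y;
     Real.sqrt m13, Real.sqrt m23 / x, -2, Real.sqrt m34 * z;
     Real.sqrt m14, Real.sqrt m24 * y, Real.sqrt m34 / z, -2]

/-- The invariant `R_{(i,j,k)}` where `αᵢ(v) = -(v i)`: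
`R = log((αᵢ(vⱼ)·αⱼ(v_k)·α_k(vᵢ)) / (αᵢ(v_k)·α_k(vⱼ)·αⱼ(vᵢ)))`. -/
noncomputable def tetraR (v : Matrix (Fin 4) (Fin 4) ℝ) (i j k : Fin 4) : ℝ :=
  Real.log (((-(v j i)) * (-(v k j)) * (-(v i k)))
    / ((-(v k i)) * (-(v j k)) * (-(v i j))))

/-! `R` is the sum of the antisymmetric edge function `(p, q) ↦ log (v q p / v p q)` around the
oriented triangle `i → j → k → i`. The four faces of the tetrahedron, oriented as in the sum,
traverse each of its six edges once in each direction, so the edge terms cancel in pairs. -/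

noncomputable def edgeLogRatio {n : Type*} (v : Matrix n n ℝ) (p q : n) : ℝ :=
  Real.log (v q p / v p q)

theorem edgeLogRatio_swap {n : Type*} (v : Matrix n n ℝ) (p q : n) :
    edgeLogRatio v q p = -edgeLogRatio v p q := by
  rw [edgeLogRatio, edgeLogRatio, ← Real.log_inv, inv_div]

theorem tetraR_eq_edgeLogRatio_add (v : Matrix (Fin 4) (Fin 4) ℝ)
    (hv : ∀ p q, p ≠ q → v p q ≠ 0) {i j k : Fin 4}
    (hij : i ≠ j) (hjk : j ≠ k) (hki : k ≠ i) :
    tetraR v i j k = edgeLogRatio v i j + edgeLogRatio v j k + edgeLogRatio v k i := by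
  have hratio : ((-(v j i)) * (-(v k j)) * (-(v i k))) / ((-(v k i)) * (-(v j k)) * (-(v i j)))
      = v j i / v i j * (v k j / v j k) * (v i k / v k i) := by ring
  have hne : ∀ p q, p ≠ q → v q p / v p q ≠ 0 := fun p q h =>
    div_ne_zero (hv q p h.symm) (hv p q h)
  rw [tetraR, hratio, Real.log_mul (mul_ne_zero (hne i j hij) (hne j k hjk)) (hne k i hki),
    Real.log_mul (hne i j hij) (hne j k hjk)]
  rfl

theorem tetraR_faces_sum_eq_zero (v : Matrix (Fin 4) (Fin 4) ℝ)
    (hv : ∀ p q, p ≠ q → v p q ≠ 0) :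
    tetraR v 1 2 3 + tetraR v 0 3 2 + tetraR v 0 1 3 + tetraR v 0 2 1 = 0 := by
  simp (disch := decide) only [tetraR_eq_edgeLogRatio_add v hv]
  rw [edgeLogRatio_swap v 2 1, edgeLogRatio_swap v 3 2, edgeLogRatio_swap v 3 1,
    edgeLogRatio_swap v 3 0, edgeLogRatio_swap v 2 0, edgeLogRatio_swap v 1 0]
  ring

theorem tetraV_ne_zero {m12 m13 m14 m23 m24 m34 x y z : ℝ}
    (h12 : 0 < m12) (h13 : 0 < m13) (h14 : 0 < m14)
    (h23 : 0 < m23) (h24 : 0 < m24) (h34 : 0 < m34)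
    (hx : 0 < x) (hy : 0 < y) (hz : 0 < z) (p q : Fin 4) (hpq : p ≠ q) :
    tetraV m12 m13 m14 m23 m24 m34 x y z p q ≠ 0 := by
  fin_cases p <;> fin_cases q <;>
    simp [tetraV, Real.sqrt_eq_zero', h12, h13, h14, h23, h24, h34, hx.ne', hy.ne', hz.ne']
      at hpq ⊢

theorem tetra_R_sum_zero
    (m12 m13 m14 m23 m24 m34 x y z : ℝ)
    (h12 : 0 < m12) (h13 : 0 < m13) (h14 : 0 < m14)
    (h23 : 0 < m23) (h24 : 0 < m24) (h34 : 0 < m34)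
    (hx : 0 < x) (hy : 0 < y) (hz : 0 < z) :
    tetraR (tetraV m12 m13 m14 m23 m24 m34 x y z) 1 2 3
      + tetraR (tetraV m12 m13 m14 m23 m24 m34 x y z) 0 3 2
      + tetraR (tetraV m12 m13 m14 m23 m24 m34 x y z) 0 1 3
      + tetraR (tetraV m12 m13 m14 m23 m24 m34 x y z) 0 2 1 = 0 :=
  tetraR_faces_sum_eq_zero _ (tetraV_ne_zero h12 h13 h14 h23 h24 h34 hx hy hz)
end

section
/- With the matrix M(x,y,z) of the tetrahedron configuration (rows v₁,…,v₄ as above, μᵢⱼ ∈ (0,4), x,y,z > 0) and R_Γ defined as the logarithmic cross-ratio invariant of each of the four vertex 3-circuits, one has R_{Γ₁} = −2 log(xyz), R_{Γ₂} = 2 log z, R_{Γ₃} = 2 log y, R_{Γ₄} = 2 log x; consequently the map (x,y,z) ∈ (0,∞)³ ↦ (R_{Γ₁}, R_{Γ₂}, R_{Γ₃}, R_{Γ₄}) is a bijection onto the hyperplane {(r₁,r₂,r₃,r₄) ∈ ℝ⁴ : r₁+r₂+r₃+r₄ = 0}. -/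
open Real Set

/-!
The parameters `x`, `y`, `z` multiply one entry of the pairs `(v₂₃, v₃₂)`,
`(v₃₄, v₄₃)`, `(v₄₂, v₂₄)` by `t` and divide the other by `t`, while the `√μᵢⱼ` occur
symmetrically and cancel in every cyclic ratio. Each circuit through vertex 1 meets exactly
one rescaled pair, so its `R` is `2 log t`; the circuit `2 → 3 → 4` meets all three against
their orientation, giving `-2 log (xyz)`. In logarithmic coordinates the map is therefore linear, with inverse
`r ↦ (exp (r₄/2), exp (r₃/2), exp (r₂/2))` on the hyperplane.
-/

lemma tetraR_eq_log_cycle_ratio (v : Matrix (Fin 4) (Fin 4) ℝ) (i j k : Fin 4) :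
    tetraR v i j k = log (v j i * v k j * v i k / (v k i * v j k * v i j)) := by
  rw [tetraR]
  congr 1
  ring

lemma log_cycle_ratio_one_scaled_edge {a b c t : ℝ} (ha : a ≠ 0) (hb : b ≠ 0) (hc : c ≠ 0)
    (ht : 0 < t) : log (a * (c * t) * b / (b * (c / t) * a)) = 2 * log t := by
  rw [show a * (c * t) * b / (b * (c / t) * a) = t ^ 2 by field_simp, log_pow]
  norm_num

lemma log_cycle_ratio_three_scaled_edges {a b c x y z : ℝ}
    (ha : a ≠ 0) (hb : b ≠ 0) (hc : c ≠ 0) (hx : 0 < x) (hy : 0 < y) (hz : 0 < z) :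
    log (a / x * (b / z) * (c / y) / (c * y * (b * z) * (a * x))) = -2 * log (x * y * z) := by
  rw [show a / x * (b / z) * (c / y) / (c * y * (b * z) * (a * x)) = ((x * y * z) ^ 2)⁻¹ by
    field_simp, log_inv, log_pow]
  norm_num

lemma bijOn_log_coords :
    BijOn (fun q : ℝ × ℝ × ℝ =>
        ![-2 * log (q.1 * q.2.1 * q.2.2), 2 * log q.2.2, 2 * log q.2.1, 2 * log q.1])
      (Ioi 0 ×ˢ Ioi 0 ×ˢ Ioi 0) {r : Fin 4 → ℝ | r 0 + r 1 + r 2 + r 3 = 0} := by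
  let g : (Fin 4 → ℝ) → ℝ × ℝ × ℝ := fun r => (exp (r 3 / 2), exp (r 2 / 2), exp (r 1 / 2))
  refine InvOn.bijOn (f' := g) ⟨?_, ?_⟩ ?_ ?_
  · rintro ⟨x, y, z⟩ ⟨hx : 0 < x, hy : 0 < y, hz : 0 < z⟩
    simp [g, exp_log, hx, hy, hz]
  · intro r (hr : r 0 + r 1 + r 2 + r 3 = 0)
    ext i
    fin_cases i <;> simp [g, ← exp_add] <;> linarith
  · rintro ⟨x, y, z⟩ ⟨hx : 0 < x, hy : 0 < y, hz : 0 < z⟩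
    show -2 * log (x * y * z) + 2 * log z + 2 * log y + 2 * log x = 0
    rw [log_mul (by positivity) hz.ne', log_mul hx.ne' hy.ne']
    ring
  · intro r _
    exact ⟨exp_pos _, exp_pos _, exp_pos _⟩

section

variable {m12 m13 m14 m23 m24 m34 x y z : ℝ}

lemma tetraR_tetraV_123 (h23 : 0 < m23) (h24 : 0 < m24) (h34 : 0 < m34)
    (hx : 0 < x) (hy : 0 < y) (hz : 0 < z) :
    tetraR (tetraV m12 m13 m14 m23 m24 m34 x y z) 1 2 3 = -2 * log (x * y * z) := by
  rw [tetraR_eq_log_cycle_ratio]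
  simp only [tetraV, Matrix.of_apply, Matrix.cons_val]
  exact log_cycle_ratio_three_scaled_edges (sqrt_pos.2 h23).ne' (sqrt_pos.2 h34).ne'
    (sqrt_pos.2 h24).ne' hx hy hz

lemma tetraR_tetraV_032 (h13 : 0 < m13) (h14 : 0 < m14) (h34 : 0 < m34) (hz : 0 < z) :
    tetraR (tetraV m12 m13 m14 m23 m24 m34 x y z) 0 3 2 = 2 * log z := by
  rw [tetraR_eq_log_cycle_ratio]
  simp only [tetraV, Matrix.of_apply, Matrix.cons_val]
  exact log_cycle_ratio_one_scaled_edge (sqrt_pos.2 h14).ne' (sqrt_pos.2 h13).ne'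
    (sqrt_pos.2 h34).ne' hz

lemma tetraR_tetraV_013 (h12 : 0 < m12) (h14 : 0 < m14) (h24 : 0 < m24) (hy : 0 < y) :
    tetraR (tetraV m12 m13 m14 m23 m24 m34 x y z) 0 1 3 = 2 * log y := by
  rw [tetraR_eq_log_cycle_ratio]
  simp only [tetraV, Matrix.of_apply, Matrix.cons_val]
  exact log_cycle_ratio_one_scaled_edge (sqrt_pos.2 h12).ne' (sqrt_pos.2 h14).ne'
    (sqrt_pos.2 h24).ne' hy

lemma tetraR_tetraV_021 (h12 : 0 < m12) (h13 : 0 < m13) (h23 : 0 < m23) (hx : 0 < x) :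
    tetraR (tetraV m12 m13 m14 m23 m24 m34 x y z) 0 2 1 = 2 * log x := by
  rw [tetraR_eq_log_cycle_ratio]
  simp only [tetraV, Matrix.of_apply, Matrix.cons_val]
  exact log_cycle_ratio_one_scaled_edge (sqrt_pos.2 h13).ne' (sqrt_pos.2 h12).ne'
    (sqrt_pos.2 h23).ne' hx

end

theorem tetra_R_parametrization
    (m12 m13 m14 m23 m24 m34 : ℝ)
    (h12 : m12 ∈ Set.Ioo (0 : ℝ) 4) (h13 : m13 ∈ Set.Ioo (0 : ℝ) 4)
    (h14 : m14 ∈ Set.Ioo (0 : ℝ) 4) (h23 : m23 ∈ Set.Ioo (0 : ℝ) 4)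
    (h24 : m24 ∈ Set.Ioo (0 : ℝ) 4) (h34 : m34 ∈ Set.Ioo (0 : ℝ) 4) :
    (∀ x y z : ℝ, 0 < x → 0 < y → 0 < z →
      tetraR (tetraV m12 m13 m14 m23 m24 m34 x y z) 1 2 3
          = -2 * Real.log (x * y * z) ∧
      tetraR (tetraV m12 m13 m14 m23 m24 m34 x y z) 0 3 2 = 2 * Real.log z ∧
      tetraR (tetraV m12 m13 m14 m23 m24 m34 x y z) 0 1 3 = 2 * Real.log y ∧
      tetraR (tetraV m12 m13 m14 m23 m24 m34 x y z) 0 2 1 = 2 * Real.log x) ∧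
    Set.BijOn
      (fun q : ℝ × ℝ × ℝ =>
        ![tetraR (tetraV m12 m13 m14 m23 m24 m34 q.1 q.2.1 q.2.2) 1 2 3,
          tetraR (tetraV m12 m13 m14 m23 m24 m34 q.1 q.2.1 q.2.2) 0 3 2,
          tetraR (tetraV m12 m13 m14 m23 m24 m34 q.1 q.2.1 q.2.2) 0 1 3,
          tetraR (tetraV m12 m13 m14 m23 m24 m34 q.1 q.2.1 q.2.2) 0 2 1])
      (Set.Ioi 0 ×ˢ Set.Ioi 0 ×ˢ Set.Ioi 0)
      {r : Fin 4 → ℝ | r 0 + r 1 + r 2 + r 3 = 0} := by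
  refine ⟨fun x y z hx hy hz => ⟨tetraR_tetraV_123 h23.1 h24.1 h34.1 hx hy hz,
    tetraR_tetraV_032 h13.1 h14.1 h34.1 hz, tetraR_tetraV_013 h12.1 h14.1 h24.1 hy,
    tetraR_tetraV_021 h12.1 h13.1 h23.1 hx⟩, bijOn_log_coords.congr ?_⟩
  rintro ⟨x, y, z⟩ ⟨hx : 0 < x, hy : 0 < y, hz : 0 < z⟩
  dsimp only
  rw [tetraR_tetraV_123 h23.1 h24.1 h34.1 hx hy hz, tetraR_tetraV_032 h13.1 h14.1 h34.1 hz,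
    tetraR_tetraV_013 h12.1 h14.1 h24.1 hy, tetraR_tetraV_021 h12.1 h13.1 h23.1 hx]
end

section
/- Let v₁ = (−2, 0, v₁₃, v₁₄), v₂ = (0, −2, v₂₃, v₂₄), v₃ = (v₃₁, v₃₂, −2, v₃₄) be vectors in ℝ⁴ with all vᵢⱼ ≥ 0, v₁₃v₃₁ = μ₁₃, v₂₃v₃₂ = μ₂₃, where μ₁₃, μ₂₃ ∈ (0,4] satisfy the angle condition arccos(√μ₁₃/2) + arccos(√μ₂₃/2) ≥ π/2, equivalently μ₁₃ + μ₂₃ ≤ 4. Suppose the inequalities v₁₃ ≥ 2 + v₁₄, v₂₃ ≥ 2 + v₂₄, and μ₁₃/v₁₃ + μ₂₃/v₂₃ ≥ 2 + v₃₄ hold. Then μ₁₃ + μ₂₃ = 4, v₁₃ = v₂₃ = 2, and v₁₄ = v₂₄ = v₃₄ = 0. -/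
open Real Set

theorem right_angled_affine_spherical_rigidity
    (v13 v14 v23 v24 v31 v32 v34 μ13 μ23 : ℝ)
    (h13 : 0 ≤ v13) (h14 : 0 ≤ v14) (h23 : 0 ≤ v23) (h24 : 0 ≤ v24)
    (h31 : 0 ≤ v31) (h32 : 0 ≤ v32) (h34 : 0 ≤ v34)
    (hμ13 : μ13 = v13 * v31) (hμ23 : μ23 = v23 * v32)
    (hμ13mem : μ13 ∈ Set.Ioc (0 : ℝ) 4) (hμ23mem : μ23 ∈ Set.Ioc (0 : ℝ) 4)
    (hineq1 : v13 ≥ 2 + v14)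
    (hineq2 : v23 ≥ 2 + v24)
    (hineq3 : μ13 / v13 + μ23 / v23 ≥ 2 + v34)
    (hangle : Real.arccos (Real.sqrt μ13 / 2) + Real.arccos (Real.sqrt μ23 / 2)
              ≥ π / 2) :
    μ13 + μ23 = 4 ∧ v13 = 2 ∧ v23 = 2 ∧ v14 = 0 ∧ v24 = 0 ∧ v34 = 0 := by
  obtain ⟨hμ13pos, hμ13le⟩ := hμ13mem
  obtain ⟨hμ23pos, hμ23le⟩ := hμ23mem
  set a := Real.sqrt μ13 / 2 with ha_def
  set b := Real.sqrt μ23 / 2 with hb_def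
  have ha0 : 0 ≤ a := by positivity
  have hb0 : 0 ≤ b := by positivity
  have ha1 : a ≤ 1 := by
    rw [ha_def, div_le_one (by norm_num)]
    calc Real.sqrt μ13 ≤ Real.sqrt 4 := Real.sqrt_le_sqrt hμ13le
      _ = 2 := by rw [show (4:ℝ) = 2^2 by norm_num, Real.sqrt_sq (by norm_num)]
  have hb1 : b ≤ 1 := by
    rw [hb_def, div_le_one (by norm_num)]
    calc Real.sqrt μ23 ≤ Real.sqrt 4 := Real.sqrt_le_sqrt hμ23le
      _ = 2 := by rw [show (4:ℝ) = 2^2 by norm_num, Real.sqrt_sq (by norm_num)]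
  -- from angle condition: a² + b² ≤ 1, i.e. μ13 + μ23 ≤ 4
  have hkey : μ13 + μ23 ≤ 4 := by
    have h1 : π / 2 - Real.arccos b ≤ Real.arccos a := by linarith
    have h2 : (0:ℝ) ≤ π / 2 - Real.arccos b := by
      have := Real.arccos_le_pi_div_two.mpr hb0
      linarith
    have h3 : Real.arccos a ≤ π := Real.arccos_le_pi a
    have hcos : Real.cos (Real.arccos a) ≤ Real.cos (π / 2 - Real.arccos b) :=
      Real.cos_le_cos_of_nonneg_of_le_pi h2 h3 h1
    rw [Real.cos_arccos (by linarith) ha1, Real.cos_pi_div_two_sub,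
      Real.sin_arccos] at hcos
    have hb2 : b ^ 2 ≤ 1 := by nlinarith
    have hsq : a ^ 2 ≤ 1 - b ^ 2 := by
      have := Real.sq_sqrt (by linarith : (0:ℝ) ≤ 1 - b ^ 2)
      nlinarith [hcos, ha0, Real.sqrt_nonneg (1 - b ^ 2)]
    have ha2 : a ^ 2 = μ13 / 4 := by
      rw [ha_def, div_pow, Real.sq_sqrt hμ13pos.le]; norm_num
    have hb2' : b ^ 2 = μ23 / 4 := by
      rw [hb_def, div_pow, Real.sq_sqrt hμ23pos.le]; norm_num
    rw [ha2, hb2'] at hsq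
    linarith
  have hv13pos : 0 < v13 := by linarith
  have hv23pos : 0 < v23 := by linarith
  have hle1 : μ13 / v13 ≤ μ13 / 2 :=
    div_le_div_of_nonneg_left hμ13pos.le (by norm_num) (by linarith)
  have hle2 : μ23 / v23 ≤ μ23 / 2 :=
    div_le_div_of_nonneg_left hμ23pos.le (by norm_num) (by linarith)
  have hsum : μ13 + μ23 = 4 := by linarith
  have hv34 : v34 = 0 := by linarith
  have he1 : μ13 / v13 = μ13 / 2 := by linarith
  have he2 : μ23 / v23 = μ23 / 2 := by linarith
  have hv13 : v13 = 2 := by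
    field_simp at he1
    rcases he1 with h | h
    · linarith
  have hv23 : v23 = 2 := by
    field_simp at he2
    rcases he2 with h | h
    · linarith
  refine ⟨hsum, hv13, hv23, by linarith, by linarith, hv34⟩
end
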